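/- Lemma 6 (hyperfunc): let K ≥ 10 and T ≥ 2 be integers and let (z*(x), y*(x)) denote the unique minimizer of (z,y) ↦ ḡ^{sc}(x,z,y). Then the coefficients a_K = (1/K)(1 − B_{1,1}/B_{1,K}) and b_K = K/B_{1,K} satisfy |a_K| ≤ 20 and |b_K| ≤ 10, and for every x ∈ ℝ^T one has H(x) := h(z*(x), y*(x)) = (K³/2) Σ_{i=1}^{T−1} (x_i − x_{i+1})². -/

import Mathlib

noncomputable section
open scoped RealInnerProductSpace

/-- `ℝⁿ` with the Euclidean structure. -/
abbrev EV (n : ℕ) : Type := EuclideanSpace ℝ (Fin n)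

/-- The space `ℝ^{K(T−1)}` of lower-level coupling variables, presented as
`(T−1)` blocks of size `K`; here the sizes are `K+1` and `T+2` so that the paper's
constraints `K ≥ 1`, `T ≥ 2` hold automatically. -/
abbrev EY (K T : ℕ) : Type := EuclideanSpace ℝ (Fin (T + 1) × Fin (K + 1))

/-- The nonconvex regularizer `Υ_r(x) := 120 ∫₁ˣ t²(t−1)/(1+(t/r)²) dt`. -/
def Upsilon (r x : ℝ) : ℝ := 120 * ∫ t in (1 : ℝ)..x, t ^ 2 * (t - 1) / (1 + (t / r) ^ 2)

/-- The tridiagonal path-Laplacian matrix `A_K` (of size `K+1`). -/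
def AK (K : ℕ) : Matrix (Fin (K + 1)) (Fin (K + 1)) ℝ := fun i j =>
  if i = j then (if i.1 = 0 ∨ i.1 = K then 1 else 2)
  else if i.1 + 1 = j.1 ∨ j.1 + 1 = i.1 then -1 else 0

/-- `B = (K^{−2} I + A_K)⁻¹` (size `K+1`). -/
def BK (K : ℕ) : Matrix (Fin (K + 1)) (Fin (K + 1)) ℝ :=
  (((K + 1 : ℝ))⁻¹ ^ 2 • (1 : Matrix (Fin (K + 1)) (Fin (K + 1)) ℝ) + AK K)⁻¹

/-- `a_K = (1/K)(1 − B_{1,1}/B_{1,K})`. -/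
def aK (K : ℕ) : ℝ := (1 / (K + 1 : ℝ)) * (1 - BK K 0 0 / BK K 0 (Fin.last K))

/-- `b_K = K / B_{1,K}`. -/
def bK (K : ℕ) : ℝ := (K + 1 : ℝ) / BK K 0 (Fin.last K)

/-- The upper-level coupling term
`h(z,y) = Σ_{i=1}^{T−1} [(a_K/2)(z_i² + z_{i+1}²) + (b_K/2)(z_i y^{(i)}_1 − z_{i+1} y^{(i)}_K)]`. -/
def hfun (K T : ℕ) (z : EV (T + 2)) (y : EY K T) : ℝ :=
  ∑ i : Fin (T + 1),
    ((aK K / 2) * ((z i.castSucc) ^ 2 + (z i.succ) ^ 2)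
      + (bK K / 2) * (z i.castSucc * y (i, 0) - z i.succ * y (i, Fin.last K)))

/-- The strongly convex sub-chain
`h^{sc}(u,v,w) = ½ Σ_{j<K} (w_j − w_{j+1})² + ‖w‖²/(2K²) − (u w_1 − v w_K)`. -/
def hsc (K : ℕ) (u v : ℝ) (w : EV (K + 1)) : ℝ :=
  (1 / 2) * ∑ j : Fin K, (w j.castSucc - w j.succ) ^ 2
    + (1 / (2 * ((K + 1 : ℝ)) ^ 2)) * ‖w‖ ^ 2 - (u * w 0 - v * w (Fin.last K))

/-- The lower-level hard instance
`ḡ^{sc}(x,z,y) = ‖z‖²/(2K²) − ⟨x,z⟩ + Σ_{i=1}^{T−1} h^{sc}(x_i, x_{i+1}, y^{(i)})`. -/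
def gbar (K T : ℕ) (x z : EV (T + 2)) (y : EY K T) : ℝ :=
  (1 / (2 * ((K + 1 : ℝ)) ^ 2)) * ‖z‖ ^ 2 - ⟪x, z⟫
    + ∑ i : Fin (T + 1), hsc K (x i.castSucc) (x i.succ) (WithLp.toLp 2 (fun j => y (i, j)))

/-- The upper-level hard instance
`f̄^{nc-sc}(x,z,y) = (√ν/2)(z₁/√K − 1)² + ν Σ_{i=1}^{T−1} Υ_r(z_i/√K) + h(z,y)`
(it does not depend on `x`). -/
def fbar (K T : ℕ) (ν r : ℝ) (z : EV (T + 2)) (y : EY K T) : ℝ :=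
  (Real.sqrt ν / 2) * (z 0 / Real.sqrt (K + 1) - 1) ^ 2
    + ν * ∑ i : Fin (T + 1), Upsilon r (z i.castSucc / Real.sqrt (K + 1))
    + hfun K T z y

/-!
Both parts of the lower-level problem are strongly convex quadratics. The `z`-part
`‖z‖²/(2K²) − ⟨x, z⟩` is minimized at `z* = K² x`. The blocks separate, and `y⁽ⁱ⁾` minimizes
`½ wᵀ M w − (xᵢ e₁ − xᵢ₊₁ e_K)ᵀ w` with `M = K⁻² I + A_K`, which is positive definite because
`A_K = DᵀD` for the difference matrix `D` of the path; hence `y⁽ⁱ⁾ = B (xᵢ e₁ − xᵢ₊₁ e_K)`.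
Reversing the path fixes `M`, so `B_{K,K} = B_{1,1}` and `B_{K,1} = B_{1,K}`, and with these the
`i`-th term of `h` collapses to `(K³/2)(xᵢ − xᵢ₊₁)²` for any value of `B_{1,1}` and `B_{1,K} ≠ 0`.

For the bounds, the last column of `B` is explicit: if `2 sinh η = 1/K`, then
`B_{j,K} = K cosh((2j − 1)η) / sinh(2Kη)`, so `b_K = sinh(2Kη) / cosh η` and
`a_K = (1 − cosh((2K − 1)η) / cosh η) / K`. As `2Kη ≤ 1`, these hyperbolic values stay below
`cosh 1 < 2`.
-/

open Matrix Real

lemma Finset.apply_le_of_forall_sum_le {ι : Type*} [Fintype ι] [DecidableEq ι] {α : ι → Type*}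
    (f : ∀ i, α i → ℝ) {y : ∀ i, α i} (h : ∀ y' : ∀ i, α i, ∑ i, f i (y i) ≤ ∑ i, f i (y' i))
    (i : ι) (a : α i) : f i (y i) ≤ f i a := by
  have := h (Function.update y i a)
  simp_rw [Function.apply_update f] at this
  rw [Finset.sum_update_of_mem (Finset.mem_univ i),
    Finset.sum_eq_add_sum_sdiff_singleton_of_mem (Finset.mem_univ i)] at this
  linarith

lemma eq_smul_of_forall_le {E : Type*} [NormedAddCommGroup E] [InnerProductSpace ℝ E]
    {a : ℝ} (ha : 0 < a) {x z : E}
    (hz : ∀ z', 1 / (2 * a) * ‖z‖ ^ 2 - ⟪x, z⟫ ≤ 1 / (2 * a) * ‖z'‖ ^ 2 - ⟪x, z'⟫) :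
    z = a • x := by
  have h := hz (a • x)
  rw [norm_smul, real_inner_smul_right, real_inner_self_eq_norm_sq, Real.norm_of_nonneg ha.le]
    at h
  have hsq : ‖z - a • x‖ ^ 2 = 2 * a * (1 / (2 * a) * ‖z‖ ^ 2 - ⟪x, z⟫
      - (1 / (2 * a) * (a * ‖x‖) ^ 2 - a * ‖x‖ ^ 2)) := by
    rw [norm_sub_sq_real, real_inner_smul_right, norm_smul, Real.norm_of_nonneg ha.le,
      real_inner_comm]
    field_simp
    ring
  rw [← sub_eq_zero, ← norm_eq_zero, ← sq_eq_zero_iff (M₀ := ℝ)]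
  refine le_antisymm ?_ (sq_nonneg _)
  rw [hsq]
  exact mul_nonpos_of_nonneg_of_nonpos (by positivity) (by linarith)

lemma Matrix.PosDef.eq_inv_mulVec_of_forall_le {n : Type*} [Fintype n] [DecidableEq n]
    {M : Matrix n n ℝ} (hM : M.PosDef) {b w : n → ℝ}
    (hw : ∀ w', 1 / 2 * (w ⬝ᵥ M *ᵥ w) - b ⬝ᵥ w ≤ 1 / 2 * (w' ⬝ᵥ M *ᵥ w') - b ⬝ᵥ w') :
    w = M⁻¹ *ᵥ b := by
  set w₀ := M⁻¹ *ᵥ b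
  have hMw₀ : M *ᵥ w₀ = b := by
    rw [mulVec_mulVec, mul_nonsing_inv _ ((isUnit_iff_isUnit_det M).mp hM.isUnit), one_mulVec]
  have hMt : Mᵀ = M := by simpa using hM.isHermitian.eq
  obtain ⟨δ, rfl⟩ : ∃ δ, w = w₀ + δ := ⟨w - w₀, by abel⟩
  have hcross : w₀ ⬝ᵥ M *ᵥ δ = b ⬝ᵥ δ := by
    rw [dotProduct_mulVec, ← mulVec_transpose, hMt, hMw₀]
  have hδ := hw w₀
  rw [mulVec_add, dotProduct_add, add_dotProduct, add_dotProduct, hcross, hMw₀,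
    dotProduct_comm δ b, dotProduct_add] at hδ
  by_contra hne
  have hpos := hM.dotProduct_mulVec_pos (x := δ) (by rintro rfl; simp at hne)
  rw [star_trivial] at hpos
  linarith

lemma Real.cosh_one_lt_two : cosh 1 < 2 := by
  have := exp_one_lt_d9
  have : exp (-1) < 1 := exp_lt_one_iff.mpr (by norm_num)
  rw [cosh_eq]
  linarith

lemma Real.arsinh_le_self {x : ℝ} (hx : 0 ≤ x) : arsinh x ≤ x := by
  simpa using arsinh_le_arsinh.mpr (self_le_sinh_iff.mpr hx)

lemma Real.cosh_sub_sub_cosh_add (x y : ℝ) :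
    cosh (x - y) - cosh (x + y) = -2 * sinh x * sinh y := by
  rw [cosh_sub, cosh_add]
  ring

lemma Real.sinh_add_sub_sinh_sub (x y : ℝ) :
    sinh (x + y) - sinh (x - y) = 2 * cosh x * sinh y := by
  rw [sinh_add, sinh_sub]
  ring

def pathDiff (K : ℕ) : Matrix (Fin K) (Fin (K + 1)) ℝ :=
  Matrix.of fun j => Pi.single j.castSucc 1 - Pi.single j.succ 1

lemma pathDiff_mulVec (K : ℕ) (w : Fin (K + 1) → ℝ) :
    pathDiff K *ᵥ w = fun j => w j.castSucc - w j.succ := by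
  ext j
  simp [pathDiff, mulVec, dotProduct, sub_mul, Finset.sum_sub_distrib, Pi.single_apply]

lemma pathDiff_transpose_mulVec (K : ℕ) (g : Fin K → ℝ) :
    (pathDiff K)ᵀ *ᵥ g = Fin.snoc g 0 - Fin.cons 0 g := by
  ext i
  simp only [mulVec, dotProduct, transpose_apply, pathDiff, of_apply, Pi.sub_apply, sub_mul,
    Finset.sum_sub_distrib]
  congr 1
  · induction i using Fin.lastCases <;> simp [Pi.single_apply, eq_comm]
  · induction i using Fin.cases <;> simp [Pi.single_apply, eq_comm]

-- `AK 0 = !![1]` is not the (zero) Laplacian of the one-vertex path.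
lemma AK_eq_transpose_mul_pathDiff {K : ℕ} (hK : K ≠ 0) :
    AK K = (pathDiff K)ᵀ * pathDiff K := by
  obtain ⟨K, rfl⟩ : ∃ K', K = K' + 1 := ⟨K - 1, by omega⟩
  ext i ⟨k, hk⟩
  change _ = ((pathDiff _)ᵀ *ᵥ fun j => pathDiff _ j ⟨k, hk⟩) i
  rw [pathDiff_transpose_mulVec, Pi.sub_apply]
  refine Fin.lastCases ?_ (Fin.cases ?_ fun i => ?_) i
  on_goal 1 => rw [Fin.snoc_last, ← Fin.succ_last, Fin.cons_succ]
  on_goal 2 => rw [Fin.snoc_castSucc, Fin.castSucc_zero, Fin.cons_zero]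
  on_goal 3 => rw [Fin.snoc_castSucc, ← Fin.succ_castSucc, Fin.cons_succ]
  all_goals
    simp only [AK, pathDiff, of_apply, Pi.sub_apply, Pi.single_apply, Fin.ext_iff, Fin.val_succ,
      Fin.val_castSucc, Fin.val_last, Fin.val_zero]
    split_ifs <;> norm_num at * <;> omega

lemma dotProduct_AK_mulVec {K : ℕ} (hK : K ≠ 0) (w : Fin (K + 1) → ℝ) :
    w ⬝ᵥ AK K *ᵥ w = ∑ j : Fin K, (w j.castSucc - w j.succ) ^ 2 := by
  rw [AK_eq_transpose_mul_pathDiff hK, ← mulVec_mulVec, dotProduct_mulVec, ← mulVec_transpose,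
    transpose_transpose, dotProduct_comm, pathDiff_mulVec]
  simp only [dotProduct, sq]

lemma AK_rev_rev (K : ℕ) (i j : Fin (K + 1)) : AK K i.rev j.rev = AK K i j := by
  have := i.isLt
  have := j.isLt
  simp only [AK, Fin.ext_iff, Fin.val_rev]
  split_ifs <;> first | rfl | (exfalso; omega)

def MK (K : ℕ) : Matrix (Fin (K + 1)) (Fin (K + 1)) ℝ :=
  ((K + 1 : ℝ))⁻¹ ^ 2 • (1 : Matrix (Fin (K + 1)) (Fin (K + 1)) ℝ) + AK K

lemma BK_eq_inv_MK (K : ℕ) : BK K = (MK K)⁻¹ := rfl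

lemma MK_posDef {K : ℕ} (hK : K ≠ 0) : (MK K).PosDef := by
  rw [MK, AK_eq_transpose_mul_pathDiff hK, ← conjTranspose_eq_transpose_of_trivial]
  exact (PosDef.one.smul (by positivity)).add_posSemidef (posSemidef_conjTranspose_mul_self _)

lemma BK_rev_rev (K : ℕ) (i j : Fin (K + 1)) : BK K i.rev j.rev = BK K i j := by
  have hM : (MK K).submatrix Fin.revPerm Fin.revPerm = MK K := by
    ext i j
    simp [MK, AK_rev_rev, one_apply]
  have h := inv_submatrix_equiv (MK K) Fin.revPerm Fin.revPerm
  rw [hM] at h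
  rw [BK_eq_inv_MK]
  simpa using congrFun (congrFun h i.rev) j.rev

lemma BK_last_zero (K : ℕ) : BK K (Fin.last K) 0 = BK K 0 (Fin.last K) := by
  simpa using BK_rev_rev K 0 (Fin.last K)

lemma BK_last_last (K : ℕ) : BK K (Fin.last K) (Fin.last K) = BK K 0 0 := by
  simpa using BK_rev_rev K 0 0

lemma hsc_eq {K : ℕ} (hK : K ≠ 0) (u v : ℝ) (w : EV (K + 1)) :
    hsc K u v w = 1 / 2 * (w.ofLp ⬝ᵥ MK K *ᵥ w.ofLp)
      - (Pi.single 0 u - Pi.single (Fin.last K) v) ⬝ᵥ w.ofLp := by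
  rw [hsc, MK, add_mulVec, dotProduct_add, dotProduct_AK_mulVec hK, smul_mulVec, one_mulVec,
    dotProduct_smul, sub_dotProduct, single_dotProduct, single_dotProduct,
    EuclideanSpace.norm_sq_eq]
  simp only [dotProduct, smul_eq_mul, Real.norm_eq_abs, sq_abs, ← sq]
  field_simp
  ring

/-- With `c = K + 1` and `2 sinh η = 1 / c` one has `cosh 2η = 1 + 1 / (2c²)`, so
`i ↦ cosh ((2i + 1)η)` satisfies the interior rows `(2 + c⁻²) ψᵢ = ψᵢ₋₁ + ψᵢ₊₁` of `MK K`, and the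
half-step phase makes it satisfy the first row too. -/
def greenAngle (K : ℕ) : ℝ := arsinh (1 / (2 * (K + 1)))

lemma sinh_greenAngle (K : ℕ) : sinh (greenAngle K) = 1 / (2 * (K + 1)) := sinh_arsinh _

lemma greenAngle_pos (K : ℕ) : 0 < greenAngle K := arsinh_pos_iff.mpr (by positivity)

lemma two_mul_greenAngle_le (K : ℕ) : 2 * (K + 1) * greenAngle K ≤ 1 := by
  have := arsinh_le_self (x := 1 / (2 * (K + 1 : ℝ))) (by positivity)
  rw [greenAngle]
  calc 2 * (K + 1) * arsinh (1 / (2 * (K + 1)))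
      ≤ 2 * (K + 1) * (1 / (2 * (K + 1))) := by gcongr
    _ = 1 := by field_simp

lemma sinh_two_mul_greenAngle_pos (K : ℕ) : 0 < sinh (2 * (K + 1) * greenAngle K) := by
  have := greenAngle_pos K
  exact sinh_pos_iff.mpr (by positivity)

lemma pathDiff_mulVec_cosh (K : ℕ) :
    pathDiff K *ᵥ (fun i => cosh ((2 * i + 1) * greenAngle K))
      = fun j : Fin K => -(sinh (2 * ((j : ℝ) + 1) * greenAngle K) / (K + 1)) := by
  ext j
  set η := greenAngle K
  simp only [pathDiff_mulVec, Fin.val_castSucc, Fin.val_succ]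
  push_cast
  rw [show (2 * (j : ℝ) + 1) * η = 2 * ((j : ℝ) + 1) * η - η by ring,
    show (2 * ((j : ℝ) + 1) + 1) * η = 2 * ((j : ℝ) + 1) * η + η by ring,
    cosh_sub_sub_cosh_add, sinh_greenAngle]
  field_simp

lemma sinh_succ_sub_sinh (K m : ℕ) :
    sinh (2 * ((m : ℝ) + 1) * greenAngle K) - sinh (2 * m * greenAngle K)
      = cosh ((2 * m + 1) * greenAngle K) / (K + 1) := by
  set η := greenAngle K
  rw [show 2 * ((m : ℝ) + 1) * η = (2 * m + 1) * η + η by ring,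
    show 2 * (m : ℝ) * η = (2 * m + 1) * η - η by ring, sinh_add_sub_sinh_sub, sinh_greenAngle]
  field_simp

lemma MK_mulVec_cosh {K : ℕ} (hK : K ≠ 0) :
    MK K *ᵥ (fun i => cosh ((2 * i + 1) * greenAngle K))
      = Pi.single (Fin.last K) (sinh (2 * (K + 1) * greenAngle K) / (K + 1)) := by
  have hcons : (Fin.cons 0 fun j : Fin K => -(sinh (2 * ((j : ℝ) + 1) * greenAngle K) / (K + 1))
      : Fin (K + 1) → ℝ)
      = fun i : Fin (K + 1) => -(sinh (2 * (i : ℝ) * greenAngle K) / (K + 1)) := by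
    ext i
    induction i using Fin.cases <;> simp
  ext i
  rw [MK, add_mulVec, AK_eq_transpose_mul_pathDiff hK, ← mulVec_mulVec, pathDiff_mulVec_cosh,
    pathDiff_transpose_mulVec, hcons, smul_mulVec, one_mulVec]
  induction i using Fin.lastCases with
  | last =>
    simp only [Pi.add_apply, Pi.smul_apply, Pi.sub_apply, Fin.snoc_last, Fin.val_last,
      Pi.single_eq_same, smul_eq_mul]
    linear_combination -(1 / (K + 1 : ℝ)) * sinh_succ_sub_sinh K K
  | cast i =>
    simp only [Pi.add_apply, Pi.smul_apply, Pi.sub_apply, Fin.snoc_castSucc, Fin.val_castSucc,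
      Pi.single_apply, Fin.castSucc_ne_last, if_false, smul_eq_mul]
    linear_combination -(1 / (K + 1 : ℝ)) * sinh_succ_sub_sinh K i

lemma BK_apply_last {K : ℕ} (hK : K ≠ 0) (i : Fin (K + 1)) :
    BK K i (Fin.last K)
      = (K + 1) * cosh ((2 * i + 1) * greenAngle K) / sinh (2 * (K + 1) * greenAngle K) := by
  have h := congrFun (congrArg (BK K *ᵥ ·) (MK_mulVec_cosh hK)) i
  have hσ := sinh_two_mul_greenAngle_pos K
  set σ := sinh (2 * (K + 1) * greenAngle K)
  simp only [BK_eq_inv_MK, mulVec_mulVec,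
    nonsing_inv_mul _ ((isUnit_iff_isUnit_det _).mp (MK_posDef hK).isUnit), one_mulVec,
    mulVec_single, Pi.smul_apply, op_smul_eq_mul, col_apply] at h
  rw [BK_eq_inv_MK, h]
  field_simp

lemma BK_zero_last {K : ℕ} (hK : K ≠ 0) :
    BK K 0 (Fin.last K) = (K + 1) * cosh (greenAngle K) / sinh (2 * (K + 1) * greenAngle K) := by
  simpa using BK_apply_last hK 0

lemma BK_zero_last_pos {K : ℕ} (hK : K ≠ 0) : 0 < BK K 0 (Fin.last K) := by
  rw [BK_zero_last hK]
  have := sinh_two_mul_greenAngle_pos K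
  positivity

lemma BK_zero_zero {K : ℕ} (hK : K ≠ 0) :
    BK K 0 0 = (K + 1) * cosh ((2 * K + 1) * greenAngle K)
      / sinh (2 * (K + 1) * greenAngle K) := by
  rw [← BK_last_last, BK_apply_last hK, Fin.val_last]

lemma aK_eq {K : ℕ} (hK : K ≠ 0) :
    aK K = (1 - cosh ((2 * K + 1) * greenAngle K) / cosh (greenAngle K)) / (K + 1) := by
  have hσ := sinh_two_mul_greenAngle_pos K
  rw [aK, BK_zero_zero hK, BK_zero_last hK]
  set σ := sinh (2 * (K + 1) * greenAngle K)
  field_simp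

lemma bK_eq {K : ℕ} (hK : K ≠ 0) :
    bK K = sinh (2 * (K + 1) * greenAngle K) / cosh (greenAngle K) := by
  rw [bK, BK_zero_last hK]
  field_simp

lemma abs_aK_le {K : ℕ} (hK : K ≠ 0) : |aK K| ≤ 1 := by
  have hη := greenAngle_pos K
  rw [aK_eq hK]
  set r := cosh ((2 * K + 1) * greenAngle K) / cosh (greenAngle K)
  have hr : 0 < r := by positivity
  have hr2 : r < 2 :=
    calc r ≤ cosh ((2 * K + 1) * greenAngle K) := div_le_self (cosh_pos _).le (one_le_cosh _)
      _ ≤ cosh 1 := by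
        rw [cosh_le_cosh, abs_of_pos (by positivity), abs_one]
        linarith [two_mul_greenAngle_le K]
      _ < 2 := cosh_one_lt_two
  rw [abs_div, abs_of_pos (by positivity : (0 : ℝ) < K + 1), div_le_one (by positivity), abs_le]
  constructor <;> linarith [(K.cast_nonneg : (0 : ℝ) ≤ K)]

lemma abs_bK_le {K : ℕ} (hK : K ≠ 0) : |bK K| ≤ 2 := by
  have hσ := sinh_two_mul_greenAngle_pos K
  rw [bK_eq hK, abs_of_pos (by positivity)]
  calc sinh (2 * (K + 1) * greenAngle K) / cosh (greenAngle K)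
      ≤ sinh (2 * (K + 1) * greenAngle K) := div_le_self hσ.le (one_le_cosh _)
    _ ≤ sinh 1 := sinh_le_sinh.mpr (two_mul_greenAngle_le K)
    _ ≤ cosh 1 := (sinh_lt_cosh 1).le
    _ ≤ 2 := cosh_one_lt_two.le

lemma gbar_minimizer_fst {K T : ℕ} {x z₀ : EV (T + 2)} {y₀ : EY K T}
    (h : ∀ z y, gbar K T x z₀ y₀ ≤ gbar K T x z y) : z₀ = ((K + 1 : ℝ) ^ 2) • x :=
  eq_smul_of_forall_le (by positivity) fun z => by
    have := h z y₀
    simp only [gbar] at this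
    linarith

lemma gbar_minimizer_snd {K T : ℕ} (hK : K ≠ 0) {x z₀ : EV (T + 2)} {y₀ : EY K T}
    (h : ∀ z y, gbar K T x z₀ y₀ ≤ gbar K T x z y) (i : Fin (T + 1)) :
    (fun j => y₀ (i, j))
      = BK K *ᵥ (Pi.single 0 (x i.castSucc) - Pi.single (Fin.last K) (x i.succ)) := by
  have hblock := Finset.apply_le_of_forall_sum_le
    (fun i w => hsc K (x i.castSucc) (x i.succ) w)
    (y := fun i => WithLp.toLp 2 fun j => y₀ (i, j))
    (fun Y => by simpa [gbar] using h z₀ (WithLp.toLp 2 fun p => Y p.1 p.2)) i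
  refine (MK_posDef hK).eq_inv_mulVec_of_forall_le fun w => ?_
  simpa [hsc_eq hK] using hblock (WithLp.toLp 2 w)

lemma coupling_term_eq {K : ℕ} (hK : K ≠ 0) (u v : ℝ) {w : Fin (K + 1) → ℝ}
    (hw : w = BK K *ᵥ (Pi.single 0 u - Pi.single (Fin.last K) v)) :
    aK K / 2 * (((K + 1 : ℝ) ^ 2 * u) ^ 2 + ((K + 1 : ℝ) ^ 2 * v) ^ 2)
      + bK K / 2 * ((K + 1 : ℝ) ^ 2 * u * w 0 - (K + 1 : ℝ) ^ 2 * v * w (Fin.last K))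
      = (K + 1 : ℝ) ^ 3 / 2 * (u - v) ^ 2 := by
  have hQ := (BK_zero_last_pos hK).ne'
  simp only [hw, mulVec_sub, mulVec_single, Pi.sub_apply, Pi.smul_apply, op_smul_eq_mul,
    col_apply, aK, bK, BK_last_zero, BK_last_last]
  field_simp
  ring

/-- **Lemma 6 (hyperfunc)**: for `K ≥ 10` (here `K = K'+10`) the coefficients satisfy
`|a_K| ≤ 20` and `|b_K| ≤ 10`, and for the unique lower-level minimizer
`(z*(x), y*(x))` of `(z,y) ↦ ḡ^{sc}(x,z,y)` one has
`H(x) = h(z*(x), y*(x)) = (K³/2) Σ_{i=1}^{T−1} (x_i − x_{i+1})²`. -/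
theorem hyperfunc_identity (K' T' : ℕ)
    (zst : EV (T' + 2) → EV (T' + 2)) (yst : EV (T' + 2) → EY (K' + 9) T')
    (hmin : ∀ (x z : EV (T' + 2)) (y : EY (K' + 9) T'),
      gbar (K' + 9) T' x (zst x) (yst x) ≤ gbar (K' + 9) T' x z y) :
    |aK (K' + 9)| ≤ 20 ∧ |bK (K' + 9)| ≤ 10 ∧
    ∀ x : EV (T' + 2),
      hfun (K' + 9) T' (zst x) (yst x)
        = ((K' + 10 : ℝ)) ^ 3 / 2 * ∑ i : Fin (T' + 1), (x i.castSucc - x i.succ) ^ 2 := by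
  have hK : K' + 9 ≠ 0 := by omega
  refine ⟨(abs_aK_le hK).trans (by norm_num), (abs_bK_le hK).trans (by norm_num), fun x => ?_⟩
  have hz := gbar_minimizer_fst (hmin x)
  have hc : ((K' + 9 : ℕ) + 1 : ℝ) = K' + 10 := by push_cast; ring
  rw [hfun, Finset.mul_sum, ← hc]
  refine Finset.sum_congr rfl fun i _ => ?_
  rw [hz, PiLp.smul_apply, PiLp.smul_apply, smul_eq_mul, smul_eq_mul]
  exact coupling_term_eq hK _ _ (gbar_minimizer_snd hK (hmin x) i)
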